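/- Let σ be an involution of a finitely generated free abelian group Λ, acting on M = Λ* × (R/Z) (affine functions on T = (Λ⊗R)/Λ twisted by the involution x ↦ σ(x) + t̃ mod Λ) by σ(λ, u) = (-σ*(λ), -λ(t̃) - u), where t̃ ∈ Λ⊗R satisfies: the class c = [t̃ + σ(t̃)] ∈ H²(Z/2; Λ) is nonzero. Then the natural map H²(Z/2; R/Z₋) → H²(Z/2; M) (induced by u ↦ (0,u), where R/Z₋ has σ(u) = -u) is the zero map. -/

import Mathlib

/-- The subgroup of `σ`-fixed elements `{m ∈ M | σ m = m}`. -/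
def fixedSub {M : Type*} [AddCommGroup M] (σ : M →+ M) : AddSubgroup M where
  carrier := {m | σ m = m}
  zero_mem' := by simp
  add_mem' := by
    intro a b ha hb
    simp only [Set.mem_setOf_eq, map_add] at *
    rw [ha, hb]
  neg_mem' := by
    intro a ha
    simp only [Set.mem_setOf_eq, map_neg] at *
    rw [ha]

theorem mem_fixedSub {M : Type*} [AddCommGroup M] {σ : M →+ M} {m : M} :
    m ∈ fixedSub σ ↔ σ m = m := Iff.rfl

/-- The image of the norm map `n ↦ n + σ n`. -/
def normIm {M : Type*} [AddCommGroup M] (σ : M →+ M) : AddSubgroup M :=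
  (AddMonoidHom.id M + σ).range

/-- `H²(ℤ/2; M) = {m | σ m = m} / {n + σ n | n ∈ M}`. -/
abbrev H2Z2 {M : Type*} [AddCommGroup M] (σ : M →+ M) :=
  fixedSub σ ⧸ (normIm σ).addSubgroupOf (fixedSub σ)

/-- The involution `u ↦ -u` on `(ℝ/ℤ)₋`. -/
noncomputable def σcirc : AddCircle (1 : ℝ) →+ AddCircle (1 : ℝ) :=
  -(AddMonoidHom.id _)

/-- The involution `σ (λ, u) = (-σ*(λ), -λ(t̃) - u)` on the module
`M = Λ* × ℝ/ℤ` of (sign-twisted) affine `S¹`-valued functions on the torus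
`T = ℝ^b/ℤ^b` with involution `x ↦ A x + t̃ mod ℤ^b`.  Here `Λ = ℤ^b`, `σ = A` is an
involutive integer matrix, `σ*(λ) = λᵀA`, and `λ(t̃) = ∑ λᵢ t̃ᵢ`. -/
noncomputable def σaff (b : ℕ) (A : Matrix (Fin b) (Fin b) ℤ) (t : Fin b → ℝ) :
    ((Fin b → ℤ) × AddCircle (1 : ℝ)) →+ ((Fin b → ℤ) × AddCircle (1 : ℝ)) where
  toFun p := (-(Matrix.vecMul p.1 A),
    -((((∑ i, (p.1 i : ℝ) * t i : ℝ)) : AddCircle (1 : ℝ))) - p.2)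
  map_zero' := by
    simp [Matrix.zero_vecMul]
  map_add' p q := by
    refine Prod.ext ?_ ?_
    · simp only [Prod.fst_add, Matrix.add_vecMul, neg_add]
    · simp only [Prod.snd_add, Prod.fst_add, Pi.add_apply]
      have h1 : (∑ i, ((p.1 i + q.1 i : ℤ) : ℝ) * t i)
          = (∑ i, (p.1 i : ℝ) * t i) + ∑ i, (q.1 i : ℝ) * t i := by
        rw [← Finset.sum_add_distrib]
        refine Finset.sum_congr rfl fun i _ => by push_cast; ring
      rw [h1, AddCircle.coe_add]
      abel

/-- The inclusion `u ↦ (0, u)` restricted to fixed points. -/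
noncomputable def ιfix (b : ℕ) (A : Matrix (Fin b) (Fin b) ℤ) (t : Fin b → ℝ) :
    fixedSub σcirc →+ fixedSub (σaff b A t) :=
  ((AddMonoidHom.inr (Fin b → ℤ) (AddCircle (1 : ℝ))).comp
      (fixedSub σcirc).subtype).codRestrict (fixedSub (σaff b A t)) (by
    intro x
    have hx : σcirc (x : AddCircle (1 : ℝ)) = x := x.2
    simp only [σcirc, AddMonoidHom.neg_apply, AddMonoidHom.id_apply] at hx
    simp only [AddMonoidHom.comp_apply, AddSubgroup.coe_subtype, AddMonoidHom.inr_apply,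
      mem_fixedSub, σaff, AddMonoidHom.coe_mk, ZeroHom.coe_mk]
    refine Prod.ext ?_ ?_
    · simp [Matrix.zero_vecMul]
    · simp only [Pi.zero_apply, Int.cast_zero, zero_mul, Finset.sum_const_zero]
      rw [show (((0 : ℝ) : AddCircle (1 : ℝ))) = 0 from rfl]
      rw [neg_zero, zero_sub, hx])

/-- The induced map `H²(ℤ/2; (ℝ/ℤ)₋) → H²(ℤ/2; M)`. -/
noncomputable def indAff (b : ℕ) (A : Matrix (Fin b) (Fin b) ℤ) (t : Fin b → ℝ) :
    H2Z2 σcirc →+ H2Z2 (σaff b A t) :=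
  QuotientAddGroup.map _ _ (ιfix b A t) (by
    intro x hx
    rw [AddSubgroup.mem_addSubgroupOf] at hx
    rw [AddSubgroup.mem_comap, AddSubgroup.mem_addSubgroupOf]
    obtain ⟨n, hn⟩ := hx
    refine ⟨((0 : Fin b → ℤ), n), ?_⟩
    simp only [AddMonoidHom.add_apply, AddMonoidHom.id_apply] at hn ⊢
    have hcoe : ((ιfix b A t x : (Fin b → ℤ) × AddCircle (1 : ℝ)))
        = ((0 : Fin b → ℤ), (x : AddCircle (1 : ℝ))) := rfl
    rw [hcoe, ← hn]
    simp only [σcirc, AddMonoidHom.neg_apply, AddMonoidHom.id_apply, σaff,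
      AddMonoidHom.coe_mk, ZeroHom.coe_mk]
    refine Prod.ext ?_ ?_
    · simp [Matrix.zero_vecMul]
    · simp only [Pi.zero_apply, Int.cast_zero, zero_mul, Finset.sum_const_zero,
        Prod.snd_add]
      rw [show (((0 : ℝ) : AddCircle (1 : ℝ))) = 0 from rfl]
      abel)

/-!
If `λ : Λ → ℤ` is `σ`-invariant, the norm of `(-λ, 0)` in `M` is `(0, λ(t̃))`. Since `c` is not a
norm in `Λ`, a character of `Λ / (1 + σ)Λ` that is nonzero at `c`, lifted to `h : Λ → ℚ` (`Λ` is
projective), gives the integral invariant functional `λ = h ∘ (1 + σ)` with `λ(c) = 2 h(c)` odd.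
Then `2 λ(t̃) = λ(t̃ + σ t̃) = λ(c)`, so `λ(t̃) ≡ 1/2`, and `1/2` generates the `2`-torsion of
`ℝ/ℤ`, where the classes of `H²(ℤ/2; (ℝ/ℤ)₋)` live.
-/

theorem AddMonoidHom.exists_comp_eq_of_range_le {A B C : Type*} [AddGroup A] [AddGroup B]
    [AddGroup C] {f : B →+ C} (hf : Function.Injective f) {g : A →+ C} (hg : g.range ≤ f.range) :
    ∃ φ : A →+ B, f.comp φ = g :=
  ⟨(ofInjective hf).symm.toAddMonoidHom.comp (g.codRestrict _ fun _ => hg ⟨_, rfl⟩),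
    ext fun _ => congrArg Subtype.val ((ofInjective hf).apply_symm_apply _)⟩

theorem exists_ratHom_separating_of_not_mem {M : Type*} [AddCommGroup M]
    [Module.Projective ℤ M] {L : AddSubgroup M} {c : M} (hc : c ∉ L) :
    ∃ h : M →+ ℚ, (∀ x ∈ L, (h x : AddCircle (1 : ℚ)) = 0) ∧ (h c : AddCircle (1 : ℚ)) ≠ 0 := by
  obtain ⟨χ, hχ⟩ := CharacterModule.exists_character_apply_ne_zero_of_ne_zero
    (a := QuotientAddGroup.mk' L c) (by simpa using hc)
  obtain ⟨h, hh⟩ := Module.projective_lifting_property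
    (QuotientAddGroup.mk' (AddSubgroup.zmultiples (1 : ℚ))).toIntLinearMap
    (χ.comp (QuotientAddGroup.mk' L)).toIntLinearMap (QuotientAddGroup.mk'_surjective _)
  have hh' : ∀ x, (h x : AddCircle (1 : ℚ)) = χ (x : M ⧸ L) := fun x => LinearMap.congr_fun hh x
  refine ⟨h.toAddMonoidHom, fun x hx => ?_, ?_⟩
  · rw [LinearMap.toAddMonoidHom_coe, hh', (QuotientAddGroup.eq_zero_iff x).2 hx, map_zero]
  · rwa [LinearMap.toAddMonoidHom_coe, hh']

theorem exists_invariant_intHom_odd_of_not_mem_normIm {M : Type*} [AddCommGroup M]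
    [Module.Projective ℤ M] (σ : M →+ M) (hσ : ∀ x, σ (σ x) = x) {c : M} (hσc : σ c = c)
    (hc : c ∉ normIm σ) : ∃ φ : M →+ ℤ, (∀ x, φ (σ x) = φ x) ∧ Odd (φ c) := by
  obtain ⟨h, hL, hhc⟩ := exists_ratHom_separating_of_not_mem hc
  obtain ⟨φ, hφ⟩ := AddMonoidHom.exists_comp_eq_of_range_le (f := Int.castAddHom ℚ)
    Int.cast_injective (g := h.comp (AddMonoidHom.id M + σ)) <| by
      rintro _ ⟨x, rfl⟩
      obtain ⟨n, hn⟩ := (AddCircle.coe_eq_zero_iff _).1 (hL _ ⟨x, rfl⟩)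
      exact ⟨n, by simpa using hn⟩
  have hφ' : ∀ x, (φ x : ℚ) = h (x + σ x) := fun x => DFunLike.congr_fun hφ x
  refine ⟨φ, fun x => Int.cast_injective (α := ℚ) ?_, ?_⟩
  · rw [hφ', hφ', hσ, add_comm]
  · have h2 : (φ c : ℚ) = 2 * h c := by rw [hφ', hσc, two_mul, map_add]
    by_contra hev
    obtain ⟨m, hm⟩ := Int.not_odd_iff_even.1 hev
    refine hhc ((AddCircle.coe_eq_zero_iff _).2 ⟨m, ?_⟩)
    rw [hm] at h2
    push_cast at h2
    rw [zsmul_one]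
    linarith

namespace Matrix

variable {n : Type*} [Fintype n]

theorem exists_vecMul_eq_self_odd_dotProduct [DecidableEq n] {A : Matrix n n ℤ} (hA : A * A = 1)
    {c : n → ℤ} (hAc : A *ᵥ c = c) (hc : ¬ ∃ m : n → ℤ, c = m + A *ᵥ m) :
    ∃ lam : n → ℤ, lam ᵥ* A = lam ∧ Odd (lam ⬝ᵥ c) := by
  have hAA : ∀ x, A *ᵥ (A *ᵥ x) = x := fun x => by rw [mulVec_mulVec, hA, one_mulVec]
  obtain ⟨φ, hφA, hφc⟩ := exists_invariant_intHom_odd_of_not_mem_normIm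
    (mulVecLin A).toAddMonoidHom hAA hAc (fun ⟨m, hm⟩ => hc ⟨m, hm.symm⟩)
  set lam := (dotProductEquiv ℤ n).symm φ.toIntLinearMap
  have hlam : ∀ x, lam ⬝ᵥ x = φ x := fun x =>
    LinearMap.congr_fun ((dotProductEquiv ℤ n).apply_symm_apply φ.toIntLinearMap) x
  refine ⟨lam, funext fun j => ?_, by rwa [hlam]⟩
  rw [← dotProduct_single_one (lam ᵥ* A), ← dotProduct_mulVec, hlam, ← dotProduct_single_one lam,
    hlam]
  exact hφA _

theorem mulVec_eq_self_of_cast_eq_add_mulVec [DecidableEq n] {A : Matrix n n ℤ} (hA : A * A = 1)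
    {t : n → ℝ} {c : n → ℤ} (hc : ∀ i, (c i : ℝ) = t i + ((A.map fun z : ℤ => (z : ℝ)) *ᵥ t) i) :
    A *ᵥ c = c := by
  set AR := A.map fun z : ℤ => (z : ℝ)
  have hAR : AR * AR = 1 := by
    change A.map (Int.castRingHom ℝ) * A.map (Int.castRingHom ℝ) = 1
    rw [← Matrix.map_mul, hA, Matrix.map_one _ (by simp) (by simp)]
  have hcast : ∀ v : n → ℤ, Int.cast ∘ (A *ᵥ v) = AR *ᵥ (Int.cast ∘ v) := fun v =>
    funext (RingHom.map_mulVec (Int.castRingHom ℝ) A v)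
  have hc' : Int.cast ∘ c = t + AR *ᵥ t := funext hc
  apply (Int.cast_injective (α := ℝ)).comp_left (α := n)
  change Int.cast ∘ (A *ᵥ c) = Int.cast ∘ c
  rw [hcast, hc', mulVec_add, mulVec_mulVec, hAR, one_mulVec, add_comm]

theorem two_mul_sum_eq_dotProduct_of_vecMul_eq_self {A : Matrix n n ℤ} {lam : n → ℤ}
    (hlam : lam ᵥ* A = lam) {t : n → ℝ} {c : n → ℤ}
    (hc : ∀ i, (c i : ℝ) = t i + ((A.map fun z : ℤ => (z : ℝ)) *ᵥ t) i) :
    2 * ∑ i, (lam i : ℝ) * t i = (lam ⬝ᵥ c : ℤ) := by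
  set AR := A.map fun z : ℤ => (z : ℝ)
  have hlamR : (Int.cast ∘ lam) ᵥ* AR = Int.cast ∘ lam := by
    have hcast : (Int.cast ∘ lam) ᵥ* AR = Int.cast ∘ (lam ᵥ* A) :=
      funext fun j => (RingHom.map_vecMul (Int.castRingHom ℝ) A lam j).symm
    rw [hcast, hlam]
  calc 2 * ∑ i, (lam i : ℝ) * t i = (Int.cast ∘ lam) ⬝ᵥ t + (Int.cast ∘ lam) ⬝ᵥ (AR *ᵥ t) := by
        rw [dotProduct_mulVec, hlamR, two_mul]; rfl
    _ = (Int.cast ∘ lam) ⬝ᵥ (Int.cast ∘ c) := by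
        rw [← dotProduct_add]
        exact congrArg _ (funext hc).symm
    _ = (lam ⬝ᵥ c : ℤ) := (RingHom.map_dotProduct (Int.castRingHom ℝ) lam c).symm

end Matrix

theorem AddCircle.mem_zmultiples_half_of_add_self_eq_zero {u : AddCircle (1 : ℝ)}
    (hu : u + u = 0) : u ∈ AddSubgroup.zmultiples ((1 / 2 : ℝ) : AddCircle (1 : ℝ)) := by
  induction u using QuotientAddGroup.induction_on with | H r => ?_
  rw [← AddCircle.coe_add, AddCircle.coe_eq_zero_iff] at hu
  obtain ⟨k, hk⟩ := hu
  refine AddSubgroup.mem_zmultiples_iff.2 ⟨k, ?_⟩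
  rw [← AddCircle.coe_zsmul]
  congr 1
  rw [zsmul_eq_mul] at hk ⊢
  linarith

theorem inr_mem_normIm_σaff {b : ℕ} {A : Matrix (Fin b) (Fin b) ℤ} {t : Fin b → ℝ}
    {lam : Fin b → ℤ} (hlam : Matrix.vecMul lam A = lam) :
    ((0 : Fin b → ℤ), ((∑ i, (lam i : ℝ) * t i : ℝ) : AddCircle (1 : ℝ))) ∈
      normIm (σaff b A t) := by
  refine ⟨(-lam, 0), ?_⟩
  simp [σaff, Matrix.neg_vecMul, hlam]

/-- Let `σ = A` be an involution of `Λ = ℤ^b` and `t̃ ∈ ℝ^b` with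
`t̃ + σ(t̃) = c ∈ Λ` (so `x ↦ σ x + t̃` is an affine involution of the torus), and
suppose the class of `c` in `H²(ℤ/2; Λ)` is nonzero, i.e. `c ∉ {n + σ n}`.  Then the
natural map `H²(ℤ/2; (ℝ/ℤ)₋) → H²(ℤ/2; M)` induced by `u ↦ (0, u)` is the zero map,
where `M = Λ* × ℝ/ℤ` carries the involution `(λ, u) ↦ (-σ*(λ), -λ(t̃) - u)`. -/
theorem stmt15 (b : ℕ) (A : Matrix (Fin b) (Fin b) ℤ) (t : Fin b → ℝ)
    (hA : A * A = 1) (cZ : Fin b → ℤ)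
    (hcZ : ∀ i, (cZ i : ℝ) = t i + Matrix.mulVec (A.map fun z : ℤ => (z : ℝ)) t i)
    (hc : ¬ ∃ n : Fin b → ℤ, cZ = n + Matrix.mulVec A n) :
    ∀ x : H2Z2 σcirc, indAff b A t x = 0 := by
  intro x
  induction x using QuotientAddGroup.induction_on with | H u => ?_
  rw [indAff, QuotientAddGroup.map_mk, QuotientAddGroup.eq_zero_iff,
    AddSubgroup.mem_addSubgroupOf]
  obtain ⟨lam, hlam, w, hw⟩ := Matrix.exists_vecMul_eq_self_odd_dotProduct hA
    (Matrix.mulVec_eq_self_of_cast_eq_add_mulVec hA hcZ) hc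
  have hhalf :
      ((∑ i, (lam i : ℝ) * t i : ℝ) : AddCircle (1 : ℝ)) = ((1 / 2 : ℝ) : AddCircle (1 : ℝ)) := by
    have h2 := Matrix.two_mul_sum_eq_dotProduct_of_vecMul_eq_self hlam hcZ
    rw [hw] at h2
    push_cast at h2
    have hS : ∑ i, (lam i : ℝ) * t i = 1 / 2 + w • (1 : ℝ) := by rw [zsmul_one]; linarith
    rw [hS, AddCircle.coe_add, AddCircle.coe_zsmul, AddCircle.coe_period, smul_zero, add_zero]
  have hu : (u : AddCircle (1 : ℝ)) + u = 0 := neg_eq_iff_add_eq_zero.1 u.2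
  exact AddSubgroup.zmultiples_le_of_mem (H := (normIm (σaff b A t)).comap (AddMonoidHom.inr _ _))
    (hhalf ▸ inr_mem_normIm_σaff hlam) (AddCircle.mem_zmultiples_half_of_add_self_eq_zero hu)
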